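/- Laplacian bound on f_s(L_q): Let f(x) = exp(−2|x|) be the Laplacian, extended multiplicatively to ℝ². For any s > 0 and any positive integer q, it holds that 1/f_s(L_q) > tanh(2/s)·E(q/s), where L_q := ∪_{z∈ℤ}((z,z) + qℤ²) and E(x) := (coth(x) + 4x·e^{2x}/(e^{2x} − 1)²)^{-1}. -/

import Mathlib

noncomputable section

/-- The Laplacian function `f(x) = exp(-2|x|)`. -/
def lap (x : ℝ) : ℝ := Real.exp (-2 * |x|)

/-- The lattice `L_q = ∪_{z∈ℤ} ((z,z) + qℤ²) ⊂ ℝ²`. -/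
def LqSet (q : ℕ) : Set (ℝ × ℝ) :=
  {v | ∃ z w₁ w₂ : ℤ, v.1 = z + q * w₁ ∧ v.2 = z + q * w₂}

/-- `f_s(L_q)`: the sum over `L_q` of the multiplicative extension of `f` to `ℝ²`,
scaled by `s` (i.e. `f_s(x) = f(x/s)`). -/
def fsLq (f : ℝ → ℝ) (s : ℝ) (q : ℕ) : ℝ :=
  ∑' v : LqSet q, f ((v : ℝ × ℝ).1 / s) * f ((v : ℝ × ℝ).2 / s)

/-- `coth x = (e^x + e^{-x})/(e^x - e^{-x})`. -/
def coth' (x : ℝ) : ℝ := (Real.exp x + Real.exp (-x)) / (Real.exp x - Real.exp (-x))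

/-- The "fudge factor" `E(x) = (coth(x) + 4x·e^{2x}/(e^{2x} − 1)²)⁻¹`. -/
def El (x : ℝ) : ℝ :=
  (coth' x + 4 * x * Real.exp (2 * x) / (Real.exp (2 * x) - 1) ^ 2)⁻¹

/-!
With `a = e^{-2/s}` one has `f(m/s) = a^|m|` for integers `m`, and every point of `L_q` is uniquely
`(z + q w₁, z + q w₂)` with `0 ≤ z < q` and `w₁, w₂ ∈ ℤ`. Hence `f_s(L_q) = ∑_{z<q} T_z²`, where
`T_z = ∑_{w ∈ ℤ} a^|z + q w| = (a^z + a^(q-z)) / (1 - A)` with `A = a^q = e^{-2q/s}` is a two-sided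
geometric series. Summing the squares gives `f_s(L_q) = ((1 - A²) / tanh(2/s) + 2qA) / (1 - A)²`,
while `E(q/s) = (1 - A)² / (1 - A² + 4(q/s)A)`. Comparing denominators, the bound reduces to
`tanh(2/s) < 2/s`, i.e. to `sinh t < t cosh t` for `t > 0`.
-/

open Finset

namespace Real

theorem sinh_lt_mul_cosh {t : ℝ} (ht : 0 < t) : sinh t < t * cosh t := by
  have hmono : StrictMonoOn (fun x ↦ x * cosh x - sinh x) (Set.Ici 0) := by
    refine strictMonoOn_of_deriv_pos (convex_Ici 0) (by fun_prop) fun x hx ↦ ?_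
    rw [interior_Ici] at hx
    have hderiv : HasDerivAt (fun x ↦ x * cosh x - sinh x) (1 * cosh x + x * sinh x - cosh x) x :=
      ((hasDerivAt_id x).mul (hasDerivAt_cosh x)).sub (hasDerivAt_sinh x)
    rw [hderiv.deriv]
    nlinarith [mul_pos hx (sinh_pos_iff.mpr hx)]
  simpa using hmono Set.self_mem_Ici ht.le ht

theorem tanh_lt_self {t : ℝ} (ht : 0 < t) : tanh t < t := by
  rw [tanh_eq_sinh_div_cosh, div_lt_iff₀ (cosh_pos t)]
  exact sinh_lt_mul_cosh ht

theorem tanh_pos {t : ℝ} (ht : 0 < t) : 0 < tanh t := by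
  rw [tanh_eq_sinh_div_cosh]
  exact div_pos (sinh_pos_iff.mpr ht) (cosh_pos t)

theorem tanh_eq_one_sub_exp_div (x : ℝ) :
    tanh x = (1 - exp (-2 * x)) / (1 + exp (-2 * x)) := by
  have hexp : exp (-2 * x) = exp (-x) ^ 2 := by rw [← exp_nat_mul]; ring_nf
  have hinv : exp x * exp (-x) = 1 := by rw [← exp_add]; simp
  rw [tanh_eq_sinh_div_cosh, sinh_eq, cosh_eq, hexp]
  field_simp
  linear_combination (2 * exp (-x)) * hinv

end Real

theorem El_eq {x : ℝ} (hx : x ≠ 0) :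
    El x = (1 - Real.exp (-2 * x)) ^ 2 /
      (1 - Real.exp (-2 * x) ^ 2 + 4 * x * Real.exp (-2 * x)) := by
  have hu : Real.exp x ≠ 0 := (Real.exp_pos x).ne'
  have hu1 : Real.exp x ^ 2 - 1 ≠ 0 := by
    rw [sub_ne_zero, ← Real.exp_nat_mul]
    simpa using hx
  have hneg : Real.exp (-x) = (Real.exp x)⁻¹ := Real.exp_neg x
  have h2 : Real.exp (2 * x) = Real.exp x ^ 2 := by rw [← Real.exp_nat_mul]; ring_nf
  have hm2 : Real.exp (-2 * x) = ((Real.exp x)⁻¹) ^ 2 := by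
    rw [← hneg, ← Real.exp_nat_mul]; ring_nf
  rw [El, coth', hneg, h2, hm2]
  field_simp
  ring

theorem mem_LqSet_of_int (q : ℕ) (z w₁ w₂ : ℤ) :
    ((((z + q * w₁ : ℤ) : ℝ), ((z + q * w₂ : ℤ) : ℝ)) : ℝ × ℝ) ∈ LqSet q :=
  ⟨z, w₁, w₂, by push_cast; ring, by push_cast; ring⟩

def lqPoint (q : ℕ) (p : Fin q × ℤ × ℤ) : LqSet q :=
  ⟨_, mem_LqSet_of_int q p.1 p.2.1 p.2.2⟩

theorem lqPoint_injective (q : ℕ) : Function.Injective (lqPoint q) := by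
  rintro ⟨z, w₁, w₂⟩ ⟨z', w₁', w₂'⟩ h
  simp only [lqPoint, Subtype.mk.injEq, Prod.mk.injEq, Int.cast_inj] at h
  obtain ⟨h₁, h₂⟩ := h
  have hq : (q : ℤ) ≠ 0 := by exact_mod_cast z.pos.ne'
  have residue (r : Fin q) (w : ℤ) : ((r : ℤ) + q * w) % q = r := by
    rw [Int.add_mul_emod_self_left, Int.emod_eq_of_lt (by positivity) (by exact_mod_cast r.isLt)]
  have hz : z = z' := Fin.ext (by exact_mod_cast (residue z w₁).symm.trans (h₁ ▸ residue z' w₁'))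
  subst hz
  have hw₁ : w₁ = w₁' := mul_left_cancel₀ hq (by linarith)
  have hw₂ : w₂ = w₂' := mul_left_cancel₀ hq (by linarith)
  rw [hw₁, hw₂]

theorem lqPoint_surjective {q : ℕ} (hq : 0 < q) : Function.Surjective (lqPoint q) := by
  rintro ⟨v, z, w₁, w₂, hv₁, hv₂⟩
  have hq' : (0 : ℤ) < q := by exact_mod_cast hq
  have hr₀ : 0 ≤ z % q := Int.emod_nonneg z hq'.ne'
  have hrq : z % q < q := Int.emod_lt_of_pos z hq'
  have hz : (z : ℝ) = (z % q : ℤ) + q * (z / q : ℤ) := by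
    exact_mod_cast (Int.emod_add_mul_ediv z q).symm
  refine ⟨(⟨(z % q).toNat, by omega⟩, z / q + w₁, z / q + w₂), Subtype.ext (Prod.ext ?_ ?_)⟩ <;>
  · simp only [lqPoint, hv₁, hv₂, hz]
    push_cast [Int.toNat_of_nonneg hr₀]
    ring

def lqEquiv {q : ℕ} (hq : 0 < q) : Fin q × ℤ × ℤ ≃ LqSet q :=
  Equiv.ofBijective (lqPoint q) ⟨lqPoint_injective q, lqPoint_surjective hq⟩

theorem hasSum_LqSet_mul {q : ℕ} (hq : 0 < q) {F : ℝ → ℝ} {T : Fin q → ℝ}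
    (hF : ∀ m : ℤ, 0 ≤ F m)
    (hT : ∀ z : Fin q, HasSum (fun w : ℤ ↦ F (((z : ℕ) + q * w : ℤ))) (T z)) :
    HasSum (fun v : LqSet q ↦ F (v : ℝ × ℝ).1 * F (v : ℝ × ℝ).2) (∑ z, T z ^ 2) := by
  set G : Fin q → ℤ → ℝ := fun z w ↦ F (((z : ℕ) + q * w : ℤ))
  have hfiber (z : Fin q) : HasSum (fun w : ℤ × ℤ ↦ G z w.1 * G z w.2) (T z ^ 2) := by
    rw [sq]
    exact (hT z).mul (hT z) <|
      (hT z).summable.mul_of_nonneg (hT z).summable (fun w ↦ hF _) (fun w ↦ hF _)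
  have hsummable : Summable fun p : Fin q × ℤ × ℤ ↦ G p.1 p.2.1 * G p.1 p.2.2 :=
    (summable_prod_of_nonneg fun p ↦ mul_nonneg (hF _) (hF _)).mpr
      ⟨fun z ↦ (hfiber z).summable, .of_finite⟩
  have htotal : HasSum (fun p : Fin q × ℤ × ℤ ↦ G p.1 p.2.1 * G p.1 p.2.2) (∑ z, T z ^ 2) := by
    rw [← (hsummable.hasSum.prod_fiberwise hfiber).unique (hasSum_fintype _)]
    exact hsummable.hasSum
  exact (lqEquiv hq).hasSum_iff.mp htotal

theorem hasSum_pow_natAbs_add_mul {a : ℝ} (ha₀ : 0 ≤ a) (ha₁ : a < 1) {q z : ℕ} (hz : z < q) :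
    HasSum (fun w : ℤ ↦ a ^ ((z : ℤ) + q * w).natAbs) ((a ^ z + a ^ (q - z)) / (1 - a ^ q)) := by
  have hgeom (k : ℕ) : HasSum (fun n : ℕ ↦ a ^ (k + q * n)) (a ^ k / (1 - a ^ q)) := by
    simpa only [pow_add, pow_mul, div_eq_mul_inv] using
      (hasSum_geometric_of_lt_one (pow_nonneg ha₀ q)
        (pow_lt_one₀ ha₀ ha₁ (by omega))).mul_left (a ^ k)
  have hpos (n : ℕ) : ((z : ℤ) + q * (n : ℤ)).natAbs = z + q * n := by omega
  have hneg (n : ℕ) : ((z : ℤ) + q * -((n : ℤ) + 1)).natAbs = q - z + q * n := by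
    rw [show (z : ℤ) + q * -((n : ℤ) + 1) = -((q - z + q * n : ℕ) : ℤ) by
      push_cast [Nat.cast_sub hz.le]; ring, Int.natAbs_neg, Int.natAbs_natCast]
  rw [add_div]
  exact HasSum.of_nat_of_neg_add_one (by simpa only [hpos] using hgeom z)
    (by simpa only [hneg] using hgeom (q - z))

theorem one_sub_sq_mul_sum_range_pow_add_pow_sq {R : Type*} [CommRing R] (a : R) (q : ℕ) :
    (1 - a ^ 2) * ∑ z ∈ range q, (a ^ z + a ^ (q - z)) ^ 2
      = (1 + a ^ 2) * (1 - a ^ (2 * q)) + 2 * q * a ^ q * (1 - a ^ 2) := by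
  have hterm : ∀ z ∈ range q,
      (a ^ z + a ^ (q - z)) ^ 2 = (a ^ 2) ^ z + a ^ 2 * (a ^ 2) ^ (q - 1 - z) + 2 * a ^ q := by
    intro z hz
    have hqz : q - z = q - 1 - z + 1 := by have := mem_range.mp hz; omega
    have hmul : a ^ z * a ^ (q - z) = a ^ q := by
      rw [← pow_add]; congr 1; have := mem_range.mp hz; omega
    rw [add_sq, mul_assoc 2, hmul, hqz]
    ring
  have hgeom : (∑ z ∈ range q, (a ^ 2) ^ z) * (1 - a ^ 2) = 1 - a ^ (2 * q) := by
    rw [pow_mul]; exact geom_sum_mul_neg _ _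
  rw [sum_congr rfl hterm, sum_add_distrib, sum_add_distrib, ← mul_sum,
    sum_range_reflect (fun z ↦ (a ^ 2) ^ z) q, sum_const, card_range, nsmul_eq_mul]
  linear_combination (1 + a ^ 2) * hgeom

theorem lap_intCast_div {s : ℝ} (hs : 0 < s) (m : ℤ) :
    lap (m / s) = Real.exp (-2 / s) ^ m.natAbs := by
  rw [lap, ← Real.exp_nat_mul, abs_div, abs_of_pos hs, Nat.cast_natAbs, Int.cast_abs]
  ring_nf

theorem fsLq_lap_eq {s : ℝ} (hs : 0 < s) {q : ℕ} (hq : 0 < q) :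
    fsLq lap s q = ((1 - Real.exp (-2 * (q / s)) ^ 2) / Real.tanh (2 / s)
      + 2 * q * Real.exp (-2 * (q / s))) / (1 - Real.exp (-2 * (q / s))) ^ 2 := by
  set a := Real.exp (-2 / s)
  have ha₀ : 0 < a := Real.exp_pos _
  have ha₁ : a < 1 := Real.exp_lt_one_iff.mpr (div_neg_of_neg_of_pos (by norm_num) hs)
  have hA : Real.exp (-2 * (q / s)) = a ^ q := by rw [← Real.exp_nat_mul]; ring_nf
  have htanh : Real.tanh (2 / s) = (1 - a ^ 2) / (1 + a ^ 2) := by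
    rw [Real.tanh_eq_one_sub_exp_div, ← Real.exp_nat_mul]; ring_nf
  have hT (z : Fin q) : HasSum (fun w : ℤ ↦ lap ((((z : ℕ) + q * w : ℤ) : ℝ) / s))
      ((a ^ (z : ℕ) + a ^ (q - z)) / (1 - a ^ q)) := by
    simpa only [lap_intCast_div hs] using hasSum_pow_natAbs_add_mul ha₀.le ha₁ z.isLt
  have hlattice :=
    hasSum_LqSet_mul hq (F := fun x ↦ lap (x / s)) (fun _ ↦ (Real.exp_pos _).le) hT
  rw [fsLq, hlattice.tsum_eq, hA, htanh]
  simp only [div_pow]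
  rw [← sum_div, Fin.sum_univ_eq_sum_range (fun z ↦ (a ^ z + a ^ (q - z)) ^ 2)]
  have hsquares := one_sub_sq_mul_sum_range_pow_add_pow_sq a q
  have hsub : 1 - a ^ 2 ≠ 0 := by nlinarith
  have hadd : 1 + a ^ 2 ≠ 0 := by positivity
  congr 1
  field_simp
  rw [← pow_mul, mul_comm q 2]
  linear_combination hsquares

/-- Laplacian bound on `f_s(L_q)`: `1/f_s(L_q) > tanh(2/s)·E(q/s)`. -/
theorem laplacian_bound_Lq (s : ℝ) (hs : 0 < s) (q : ℕ) (hq : 0 < q) :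
    1 / fsLq lap s q > Real.tanh (2 / s) * El (q / s) := by
  have hx : 0 < (q : ℝ) / s := by positivity
  rw [fsLq_lap_eq hs hq, El_eq hx.ne']
  set t := Real.tanh (2 / s)
  set A := Real.exp (-2 * (q / s))
  have ht : 0 < t := Real.tanh_pos (by positivity)
  have hA₀ : 0 < A := Real.exp_pos _
  have hA₁ : A < 1 := Real.exp_lt_one_iff.mpr (by linarith)
  have hqA : 0 < 2 * q * A := by positivity
  have hN : 0 < (1 - A ^ 2) / t + 2 * q * A := add_pos (div_pos (by nlinarith) ht) hqA
  have hD : 0 < 1 - A ^ 2 + 4 * (q / s) * A := by nlinarith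
  have hden : t * ((1 - A ^ 2) / t + 2 * q * A) < 1 - A ^ 2 + 4 * (q / s) * A := by
    rw [mul_add, mul_div_cancel₀ _ ht.ne']
    linear_combination (2 * q * A) * Real.tanh_lt_self (by positivity : 0 < 2 / s)
  rw [one_div_div, gt_iff_lt, mul_div_assoc', div_lt_div_iff₀ hD hN]
  linear_combination (1 - A) ^ 2 * hden

end
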